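/- arXiv:2102.12655 — 5 statements merged into one kernel-verified Lean document; each statement's English description precedes it below -/
import Mathlib

section
/- Let U and T be unitary operators on a finite-dimensional complex Hilbert space with ‖T − U‖ ≤ 1/√2 (operator norm), and let ψ be a unit vector. Define f = 1 − |⟨ψ, U†Tψ⟩|² and θ = Arg(⟨ψ, U†Tψ⟩), and let ℰ = ‖(T − U)ψ‖. Then f + θ²/4 ≤ ℰ² ≤ 2f + θ². -/
/-!
Write `z = ⟨Uψ, Tψ⟩ = r e^{iθ}`. Since `Uψ, Tψ` are unit vectors, `ℰ² = 2 - 2 Re z = 2 - 2r cos θ`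
and `r ≤ 1`, while `ℰ ≤ 1/√2` forces `Re z ≥ 3/4`, hence `r ≥ 3/4`. Both bounds then follow from
the elementary estimates `1 - θ²/2 ≤ cos θ ≤ 1 - 2θ²/π²` together with `π² < 12`.
-/

open scoped InnerProductSpace

theorem Complex.two_sub_two_mul_re_le {z : ℂ} (hz : ‖z‖ ≤ 1) :
    2 - 2 * z.re ≤ 2 * (1 - ‖z‖ ^ 2) + arg z ^ 2 := by
  have hcos := mul_le_mul_of_nonneg_left (Real.one_sub_sq_div_two_le_cos (x := arg z))
    (norm_nonneg z)
  -- after `cos θ ≥ 1 - θ²/2`, the slack is `(1 - r) (2r + θ²)`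
  have hslack : 0 ≤ (1 - ‖z‖) * (2 * ‖z‖ + arg z ^ 2) := by
    have := norm_nonneg z
    have := sq_nonneg (arg z)
    apply mul_nonneg <;> linarith
  rw [← Complex.norm_mul_cos_arg z]
  nlinarith

open Real in
theorem Complex.one_sub_sq_norm_add_arg_sq_div_four_le {z : ℂ} (hz : 3 / 4 ≤ ‖z‖) :
    1 - ‖z‖ ^ 2 + arg z ^ 2 / 4 ≤ 2 - 2 * z.re := by
  have hcos : Real.cos (arg z) ≤ 1 - 2 / π ^ 2 * arg z ^ 2 :=
    cos_le_one_sub_mul_cos_sq (Complex.abs_arg_le_pi z)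
  have hπ : π ^ 2 < 12 := by nlinarith [pi_lt_d2, pi_pos]
  have hcoeff : 1 / 4 ≤ 4 * ‖z‖ / π ^ 2 := by
    rw [le_div_iff₀ (by positivity)]
    linarith
  have harg : arg z ^ 2 / 4 ≤ 2 * ‖z‖ * (2 / π ^ 2 * arg z ^ 2) := by
    calc arg z ^ 2 / 4 = 1 / 4 * arg z ^ 2 := by ring
      _ ≤ 4 * ‖z‖ / π ^ 2 * arg z ^ 2 := by gcongr
      _ = 2 * ‖z‖ * (2 / π ^ 2 * arg z ^ 2) := by ring
  have hcos' := mul_le_mul_of_nonneg_left hcos (by positivity : (0 : ℝ) ≤ 2 * ‖z‖)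
  -- `2 - 2r cos θ - (1 - r²) = (1 - r)² + 2r (1 - cos θ)`
  rw [← Complex.norm_mul_cos_arg z]
  nlinarith [sq_nonneg (1 - ‖z‖)]

theorem norm_sub_sq_eq_two_sub_two_mul_re_inner {𝕜 E : Type*} [RCLike 𝕜]
    [SeminormedAddCommGroup E] [InnerProductSpace 𝕜 E] {u v : E} (hu : ‖u‖ = 1) (hv : ‖v‖ = 1) :
    ‖v - u‖ ^ 2 = 2 - 2 * RCLike.re ⟪u, v⟫_𝕜 := by
  rw [@norm_sub_sq 𝕜, hu, hv, inner_re_symm]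
  ring

/-- For unitaries `U, T` with `‖T - U‖ ≤ 1/√2` and a unit vector `ψ`, setting
`f = 1 - |⟨ψ, U†Tψ⟩|²`, `θ = Arg ⟨ψ, U†Tψ⟩` and `ℰ = ‖(T - U) ψ‖`, we have
`f + θ²/4 ≤ ℰ² ≤ 2f + θ²`. -/
theorem trotter_fidelity_phase_bounds (n : ℕ)
    (U T : EuclideanSpace ℂ (Fin n) →L[ℂ] EuclideanSpace ℂ (Fin n))
    (hU : U ∈ unitary (EuclideanSpace ℂ (Fin n) →L[ℂ] EuclideanSpace ℂ (Fin n)))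
    (hT : T ∈ unitary (EuclideanSpace ℂ (Fin n) →L[ℂ] EuclideanSpace ℂ (Fin n)))
    (hTU : ‖T - U‖ ≤ 1 / Real.sqrt 2)
    (ψ : EuclideanSpace ℂ (Fin n)) (hψ : ‖ψ‖ = 1)
    (f θ ℰ : ℝ)
    (hf : f = 1 - ‖⟪ψ, (ContinuousLinearMap.adjoint U) (T ψ)⟫_ℂ‖ ^ 2)
    (hθ : θ = Complex.arg ⟪ψ, (ContinuousLinearMap.adjoint U) (T ψ)⟫_ℂ)
    (hE : ℰ = ‖(T - U) ψ‖) :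
    f + θ ^ 2 / 4 ≤ ℰ ^ 2 ∧ ℰ ^ 2 ≤ 2 * f + θ ^ 2 := by
  rw [ContinuousLinearMap.adjoint_inner_right] at hf hθ
  set z : ℂ := ⟪U ψ, T ψ⟫_ℂ
  have hUψ : ‖U ψ‖ = 1 := by rw [U.norm_map_of_mem_unitary hU, hψ]
  have hTψ : ‖T ψ‖ = 1 := by rw [T.norm_map_of_mem_unitary hT, hψ]
  have hE_sq : ℰ ^ 2 = 2 - 2 * z.re := by
    rw [hE, sub_apply, norm_sub_sq_eq_two_sub_two_mul_re_inner (𝕜 := ℂ) hUψ hTψ]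
    rfl
  have hz_le : ‖z‖ ≤ 1 := by
    simpa [hUψ, hTψ] using norm_inner_le_norm (𝕜 := ℂ) (U ψ) (T ψ)
  have hE_le : ℰ ≤ 1 / Real.sqrt 2 := by
    simpa [hE, hψ] using (T - U).le_of_opNorm_le hTU ψ
  have hE_sq_le : ℰ ^ 2 ≤ 1 / 2 := by
    calc ℰ ^ 2 ≤ (1 / Real.sqrt 2) ^ 2 := pow_le_pow_left₀ (hE ▸ norm_nonneg _) hE_le 2
      _ = 1 / 2 := by rw [div_pow, Real.sq_sqrt zero_le_two, one_pow]
  have hz_ge : 3 / 4 ≤ ‖z‖ := by linarith [Complex.re_le_norm z]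
  subst hf hθ
  rw [hE_sq]
  exact ⟨Complex.one_sub_sq_norm_add_arg_sq_div_four_le hz_ge, Complex.two_sub_two_mul_re_le hz_le⟩
end

section
/- Let P and P̃ be orthogonal projectors with δ = ‖P − P̃‖ < 1/2, and let Ũ be a unitary commuting with P̃. Then for any density operator ρ with Tr(ρP) = 1, the leakage satisfies 1 − Tr(Ũ ρ Ũ† P) ≤ 4δ². -/
/-!
Conjugating by `Ũ`, the leakage is `1 - Tr(ρ Q)` for the rotated projector `Q = Ũ† P Ũ`, and
since `Ũ` fixes `P̃` we get `‖Q - P‖ ≤ ‖Ũ† (P - P̃) Ũ‖ + ‖P̃ - P‖ = 2δ`. Writing `ρ = ∑ |uᵢ⟩⟨uᵢ|`,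
the condition `Tr(ρ P) = 1 = Tr ρ` forces `P uᵢ = uᵢ`, hence
`1 - Tr(ρ Q) = ∑ ‖(1 - Q) uᵢ‖² = ∑ ‖(P - Q) uᵢ‖² ≤ ‖P - Q‖² ∑ ‖uᵢ‖² = ‖P - Q‖²`.
-/

open scoped InnerProductSpace
open ContinuousLinearMap InnerProductSpace RCLike

lemma IsStarProjection.star_mul_mul_of_mem_unitary {R : Type*} [Monoid R] [StarMul R] {p u : R}
    (hp : IsStarProjection p) (hu : u ∈ unitary R) : IsStarProjection (star u * p * u) where
  isIdempotentElem := by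
    calc star u * p * u * (star u * p * u) = star u * (p * (u * star u) * p) * u := by
          simp only [mul_assoc]
      _ = star u * p * u := by
          rw [Unitary.mul_star_self_of_mem hu, mul_one, hp.isIdempotentElem.eq, mul_assoc]
  isSelfAdjoint := by
    rw [IsSelfAdjoint, star_mul, star_mul, star_star, hp.isSelfAdjoint.star_eq, mul_assoc]

lemma norm_star_mul_mul_sub_le {A : Type*} [NormedRing A] [StarRing A] [CStarRing A]
    {u p q : A} (hu : u ∈ unitary A) (hq : Commute u q) :
    ‖star u * p * u - p‖ ≤ 2 * ‖p - q‖ := by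
  have hq_conj : star u * q * u = q := by
    rw [mul_assoc, ← hq.eq, ← mul_assoc, Unitary.star_mul_self_of_mem hu, one_mul]
  calc ‖star u * p * u - p‖ = ‖star u * (p - q) * u + (q - p)‖ := by
        rw [mul_sub, sub_mul, hq_conj]; abel_nf
    _ ≤ ‖star u * (p - q) * u‖ + ‖q - p‖ := norm_add_le _ _
    _ = 2 * ‖p - q‖ := by
        rw [CStarRing.norm_mul_mem_unitary _ hu,
          CStarRing.norm_mem_unitary_mul _ (Unitary.star_mem hu), norm_sub_rev q]
        ring

section
variable {𝕜 E : Type*} [RCLike 𝕜] [NormedAddCommGroup E] [InnerProductSpace 𝕜 E]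

lemma trace_sum_rankOne_comp [FiniteDimensional 𝕜 E] {m : ℕ} (u : Fin m → E)
    (A : E →L[𝕜] E) :
    LinearMap.trace 𝕜 E ((∑ i, rankOne 𝕜 (u i) (u i)) ∘L A : E →L[𝕜] E)
      = ∑ i, ⟪u i, A (u i)⟫_𝕜 := by
  simp only [finsetSum_comp, toLinearMap_sum, map_sum]
  refine Finset.sum_congr rfl fun i _ => ?_
  rw [toLinearMap_comp, LinearMap.trace_comp_comm', ← toLinearMap_comp, comp_rankOne,
    trace_rankOne]

variable [CompleteSpace E]

lemma IsStarProjection.re_inner_apply_self {p : E →L[𝕜] E}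
    (hp : IsStarProjection p) (x : E) : re ⟪x, p x⟫_𝕜 = ‖p x‖ ^ 2 := by
  nth_rewrite 1 [← hp.isIdempotentElem.eq]
  rw [mul_apply_eq_comp, ← adjoint_inner_left, ← star_eq_adjoint,
    hp.isSelfAdjoint.star_eq, inner_self_eq_norm_sq]

variable [FiniteDimensional 𝕜 E]

theorem one_sub_re_trace_comp_le_norm_sub_sq {ρ P Q : E →L[𝕜] E} (hρ : ρ.IsPositive)
    (hρtr : LinearMap.trace 𝕜 E ρ = 1)
    (hsupp : LinearMap.trace 𝕜 E (ρ ∘L P : E →L[𝕜] E) = 1)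
    (hP : IsStarProjection P) (hQ : IsStarProjection Q) :
    1 - re (LinearMap.trace 𝕜 E (ρ ∘L Q : E →L[𝕜] E)) ≤ ‖P - Q‖ ^ 2 := by
  obtain ⟨m, u, hρu⟩ := isPositive_iff_eq_sum_rankOne.mp hρ
  have hexp : ∀ R : E →L[𝕜] E, IsStarProjection R →
      re (LinearMap.trace 𝕜 E (ρ ∘L R : E →L[𝕜] E)) = ∑ i, ‖R (u i)‖ ^ 2 := by
    intro R hR
    simp only [hρu, trace_sum_rankOne_comp, map_sum, hR.re_inner_apply_self]
  have hcompl : ∀ R : E →L[𝕜] E, re (LinearMap.trace 𝕜 E (ρ ∘L (1 - R) : E →L[𝕜] E))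
      = 1 - re (LinearMap.trace 𝕜 E (ρ ∘L R : E →L[𝕜] E)) := by
    intro R
    rw [← mul_def, mul_sub, mul_one, toLinearMap_sub, map_sub, hρtr, map_sub, one_re, mul_def]
  have hnorm : ∑ i, ‖u i‖ ^ 2 = 1 := by
    have h1 := hexp 1 (.one _)
    rwa [← mul_def, mul_one, hρtr, one_re, eq_comm] at h1
  have hfix : ∀ i, P (u i) = u i := by
    have hsum := hexp _ hP.one_sub
    rw [hcompl, hsupp, one_re, sub_self, eq_comm,
      Finset.sum_eq_zero_iff_of_nonneg fun i _ => sq_nonneg _] at hsum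
    intro i
    have hi := hsum i (Finset.mem_univ i)
    rwa [sq_eq_zero_iff, norm_eq_zero, sub_apply, one_apply_eq_self, sub_eq_zero,
      eq_comm] at hi
  calc 1 - re (LinearMap.trace 𝕜 E (ρ ∘L Q : E →L[𝕜] E))
      = ∑ i, ‖(P - Q) (u i)‖ ^ 2 := by
        rw [← hcompl, hexp _ hQ.one_sub]
        simp only [sub_apply, one_apply_eq_self, hfix]
    _ ≤ ∑ i, (‖P - Q‖ * ‖u i‖) ^ 2 := by gcongr; exact le_opNorm _ _
    _ = ‖P - Q‖ ^ 2 := by simp only [mul_pow, ← Finset.mul_sum, hnorm, mul_one]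

end

theorem leakage_rate_bound_general (n : ℕ)
    (P Pt Ut ρ : EuclideanSpace ℂ (Fin n) →L[ℂ] EuclideanSpace ℂ (Fin n))
    (hP1 : IsIdempotentElem P) (hP2 : IsSelfAdjoint P)
    (hUt : Ut ∈ unitary (EuclideanSpace ℂ (Fin n) →L[ℂ] EuclideanSpace ℂ (Fin n)))
    (hcomm : Ut ∘L Pt = Pt ∘L Ut)
    (hρpos : ρ.IsPositive)
    (hρtr : LinearMap.trace ℂ (EuclideanSpace ℂ (Fin n)) (ρ : EuclideanSpace ℂ (Fin n) →ₗ[ℂ] EuclideanSpace ℂ (Fin n)) = 1)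
    (hsupp : LinearMap.trace ℂ (EuclideanSpace ℂ (Fin n)) ((ρ ∘L P : EuclideanSpace ℂ (Fin n) →L[ℂ] EuclideanSpace ℂ (Fin n)) : EuclideanSpace ℂ (Fin n) →ₗ[ℂ] EuclideanSpace ℂ (Fin n)) = 1) :
    1 - (LinearMap.trace ℂ (EuclideanSpace ℂ (Fin n))
        ((Ut ∘L ρ ∘L (ContinuousLinearMap.adjoint Ut) ∘L P :
          EuclideanSpace ℂ (Fin n) →L[ℂ] EuclideanSpace ℂ (Fin n)) :
          EuclideanSpace ℂ (Fin n) →ₗ[ℂ] EuclideanSpace ℂ (Fin n))).re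
      ≤ 4 * ‖P - Pt‖ ^ 2 := by
  have hP : IsStarProjection P := ⟨hP1, hP2⟩
  have hcyclic : LinearMap.trace ℂ (EuclideanSpace ℂ (Fin n)) (Ut ∘L ρ ∘L adjoint Ut ∘L P)
      = LinearMap.trace ℂ (EuclideanSpace ℂ (Fin n)) (ρ ∘L (star Ut * P * Ut)) := by
    rw [toLinearMap_comp, LinearMap.trace_comp_comm', ← toLinearMap_comp, star_eq_adjoint]
    simp only [mul_def, comp_assoc]
  have hrotated : ‖P - star Ut * P * Ut‖ ≤ 2 * ‖P - Pt‖ := by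
    rw [norm_sub_rev]
    exact norm_star_mul_mul_sub_le (p := P) hUt hcomm
  calc 1 - (LinearMap.trace ℂ (EuclideanSpace ℂ (Fin n)) (Ut ∘L ρ ∘L adjoint Ut ∘L P)).re
      ≤ ‖P - star Ut * P * Ut‖ ^ 2 := by
        rw [hcyclic]
        exact one_sub_re_trace_comp_le_norm_sub_sq hρpos hρtr hsupp hP
          (hP.star_mul_mul_of_mem_unitary hUt)
    _ ≤ (2 * ‖P - Pt‖) ^ 2 := by gcongr
    _ = 4 * ‖P - Pt‖ ^ 2 := by ring

/-- Leakage bound: if `P, P̃` are orthogonal projectors with `δ = ‖P - P̃‖ < 1/2`,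
`Ũ` is a unitary commuting with `P̃`, and `ρ` is a density operator with
`Tr(ρ P) = 1`, then `1 - Tr(Ũ ρ Ũ† P) ≤ 4 δ²`. -/
theorem leakage_rate_bound (n : ℕ)
    (P Pt Ut ρ : EuclideanSpace ℂ (Fin n) →L[ℂ] EuclideanSpace ℂ (Fin n))
    (hP1 : IsIdempotentElem P) (hP2 : IsSelfAdjoint P)
    (hPt1 : IsIdempotentElem Pt) (hPt2 : IsSelfAdjoint Pt)
    (hUt : Ut ∈ unitary (EuclideanSpace ℂ (Fin n) →L[ℂ] EuclideanSpace ℂ (Fin n)))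
    (hcomm : Ut ∘L Pt = Pt ∘L Ut)
    (hδ : ‖P - Pt‖ < 1 / 2)
    (hρpos : ρ.IsPositive)
    (hρtr : LinearMap.trace ℂ (EuclideanSpace ℂ (Fin n)) (ρ : EuclideanSpace ℂ (Fin n) →ₗ[ℂ] EuclideanSpace ℂ (Fin n)) = 1)
    (hsupp : LinearMap.trace ℂ (EuclideanSpace ℂ (Fin n)) ((ρ ∘L P : EuclideanSpace ℂ (Fin n) →L[ℂ] EuclideanSpace ℂ (Fin n)) : EuclideanSpace ℂ (Fin n) →ₗ[ℂ] EuclideanSpace ℂ (Fin n)) = 1) :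
    1 - (LinearMap.trace ℂ (EuclideanSpace ℂ (Fin n))
        ((Ut ∘L ρ ∘L (ContinuousLinearMap.adjoint Ut) ∘L P :
          EuclideanSpace ℂ (Fin n) →L[ℂ] EuclideanSpace ℂ (Fin n)) :
          EuclideanSpace ℂ (Fin n) →ₗ[ℂ] EuclideanSpace ℂ (Fin n))).re
      ≤ 4 * ‖P - Pt‖ ^ 2 :=
  leakage_rate_bound_general n P Pt Ut ρ hP1 hP2 hUt hcomm hρpos hρtr hsupp
end

section
/- Let H = Σ_{l=1}^Γ H_l be Hermitian with Hermitian layers satisfying [H_l, H_m] = 0 whenever |l − m| > 1. Then for every eigenvector ψ of H and every l, ⟨ψ, [H_l, H_{l+1}] ψ⟩ = 0. Consequently, the first-order Trotter perturbation V = (i/2) Σ_{l>m} [H_l, H_m] satisfies ⟨ψ, V ψ⟩ = 0. -/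
/-!
The expectation of a commutator `[A, H]` in an eigenvector `ψ` of a Hermitian `H` vanishes,
because `H` acts on `ψ` from the right and on `star ψ` from the left by the same real eigenvalue.
Taking `A = H_l` gives `Σ_m ⟨[H_l, H_m]⟩ = 0` for every `l`. Since only the neighbours `m = l ± 1`
contribute and `⟨[H_l, H_{l-1}]⟩ = -⟨[H_{l-1}, H_l]⟩`, induction on `l` kills every
`⟨[H_l, H_{l+1}]⟩`, hence every `⟨[H_l, H_m]⟩`.
-/

open Matrix

namespace Matrix

open scoped ComplexOrder

variable {𝕜 n : Type*} [RCLike 𝕜] [Fintype n]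

theorem IsHermitian.star_eq_of_mulVec_eq_smul {M : Matrix n n 𝕜} (hM : M.IsHermitian)
    {ψ : n → 𝕜} (hψ : ψ ≠ 0) {E : 𝕜} (heig : M *ᵥ ψ = E • ψ) : star E = E := by
  have hnorm : star ψ ⬝ᵥ ψ ≠ 0 := fun h => hψ (dotProduct_star_self_eq_zero.mp h)
  refine mul_right_cancel₀ hnorm ?_
  calc star E * (star ψ ⬝ᵥ ψ) = star (M *ᵥ ψ) ⬝ᵥ ψ := by
        rw [heig, star_smul, smul_dotProduct, smul_eq_mul]
    _ = star ψ ⬝ᵥ M *ᵥ ψ := by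
        rw [star_mulVec, hM.eq, dotProduct_mulVec]
    _ = E * (star ψ ⬝ᵥ ψ) := by
        rw [heig, dotProduct_smul, smul_eq_mul]

theorem IsHermitian.dotProduct_commutator_mulVec_eq_zero {M : Matrix n n 𝕜} (hM : M.IsHermitian)
    {ψ : n → 𝕜} {E : 𝕜} (heig : M *ᵥ ψ = E • ψ) (A : Matrix n n 𝕜) :
    star ψ ⬝ᵥ (A * M - M * A) *ᵥ ψ = 0 := by
  rcases eq_or_ne ψ 0 with rfl | hψ
  · simp
  have hleft : star ψ ᵥ* M = E • star ψ := by
    rw [← hM.eq, ← star_mulVec, heig, star_smul, hM.star_eq_of_mulVec_eq_smul hψ heig]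
  rw [sub_mulVec, dotProduct_sub, ← mulVec_mulVec, ← mulVec_mulVec, heig, mulVec_smul,
    dotProduct_mulVec _ M, hleft, dotProduct_smul, smul_dotProduct, dotProduct_mulVec, sub_self]

end Matrix

section Band

variable {G : Type*} [AddCommGroup G] {Γ : ℕ} (c : Fin Γ → Fin Γ → G)
  (hdiag : ∀ l, c l l = 0) (hanti : ∀ l m, c m l = -c l m)
  (hfar : ∀ l m : Fin Γ, 1 < |(l : ℤ) - (m : ℤ)| → c l m = 0) (hrow : ∀ l, ∑ m, c l m = 0)
include hdiag hanti hfar hrow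

theorem succ_eq_zero_of_antisymm_of_band_of_row_sum_eq_zero (k : ℕ) (h1 : k < Γ)
    (h2 : k + 1 < Γ) : c ⟨k, h1⟩ ⟨k + 1, h2⟩ = 0 := by
  induction k with
  | zero =>
    rw [← hrow ⟨0, h1⟩, Finset.sum_eq_single_of_mem _ (Finset.mem_univ _)]
    intro j _ hj
    rcases Nat.lt_or_ge j 1 with hj0 | hj2
    · rw [show j = ⟨0, h1⟩ by ext; simp only; omega, hdiag]
    · refine hfar _ _ ?_
      have : (j : ℕ) ≠ 1 := fun h => hj (Fin.ext h)
      rw [lt_abs]; simp only; omega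
  | succ k ih =>
    rw [← hrow ⟨k + 1, h1⟩, Finset.sum_eq_single_of_mem _ (Finset.mem_univ _)]
    intro j _ hj
    have : (j : ℕ) ≠ k + 2 := fun h => hj (Fin.ext h)
    rcases lt_trichotomy (j : ℕ) (k + 1) with hlt | heq | hgt
    · rcases Nat.lt_or_ge (j : ℕ) k with hfar' | hk
      · exact hfar _ _ (by rw [lt_abs]; simp only; omega)
      · rw [show j = ⟨k, by omega⟩ by ext; simp only; omega, hanti, ih, neg_zero]
    · rw [show j = ⟨k + 1, h1⟩ from Fin.ext heq, hdiag]
    · exact hfar _ _ (by rw [lt_abs]; simp only; omega)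

theorem eq_zero_of_antisymm_of_band_of_row_sum_eq_zero (l m : Fin Γ) : c l m = 0 := by
  have hsucc := succ_eq_zero_of_antisymm_of_band_of_row_sum_eq_zero c hdiag hanti hfar hrow
  rcases lt_trichotomy (l : ℕ) (m : ℕ) with hlm | hlm | hlm
  · rcases Nat.lt_or_ge ((l : ℕ) + 1) m with hfar' | hadj
    · exact hfar _ _ (by rw [lt_abs]; omega)
    · rw [show m = ⟨l + 1, by omega⟩ by ext; simp only; omega]
      exact hsucc l l.isLt _
  · rw [Fin.ext hlm, hdiag]
  · rcases Nat.lt_or_ge ((m : ℕ) + 1) l with hfar' | hadj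
    · exact hfar _ _ (by rw [lt_abs]; omega)
    · rw [hanti, show l = ⟨m + 1, by omega⟩ by ext; simp only; omega, hsucc m m.isLt _, neg_zero]

end Band

theorem layered_commutator_expectation_zero_general (n Γ : ℕ)
    (H : Fin Γ → Matrix (Fin n) (Fin n) ℂ)
    (hherm : ∀ l, (H l).IsHermitian)
    (hcomm : ∀ l m : Fin Γ, 1 < |(l : ℤ) - (m : ℤ)| → H l * H m = H m * H l)
    (ψ : Fin n → ℂ) (E : ℂ)
    (heig : (∑ l, H l).mulVec ψ = E • ψ) :
    (∀ (l : ℕ) (h1 : l < Γ) (h2 : l + 1 < Γ),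
      star ψ ⬝ᵥ (H ⟨l, h1⟩ * H ⟨l + 1, h2⟩ - H ⟨l + 1, h2⟩ * H ⟨l, h1⟩).mulVec ψ = 0)
    ∧ star ψ ⬝ᵥ
        ((Complex.I / 2) •
          ∑ l : Fin Γ, ∑ m ∈ Finset.univ.filter (· < l),
            (H l * H m - H m * H l)).mulVec ψ = 0 := by
  have hsum : (∑ l, H l).IsHermitian := isSelfAdjoint_sum _ fun l _ => hherm l
  have hexp : ∀ l m, star ψ ⬝ᵥ (H l * H m - H m * H l) *ᵥ ψ = 0 := by
    refine eq_zero_of_antisymm_of_band_of_row_sum_eq_zero _ (fun l => by simp)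
      (fun l m => by rw [← neg_sub, neg_mulVec, dotProduct_neg])
      (fun l m hlm => by rw [hcomm l m hlm, sub_self, zero_mulVec, dotProduct_zero]) fun l => ?_
    rw [← dotProduct_sum, ← sum_mulVec, Finset.sum_sub_distrib, ← Finset.mul_sum, ← Finset.sum_mul]
    exact hsum.dotProduct_commutator_mulVec_eq_zero heig (H l)
  refine ⟨fun l h1 h2 => hexp _ _, ?_⟩
  simp only [smul_mulVec, sum_mulVec, dotProduct_smul, dotProduct_sum, hexp,
    Finset.sum_const_zero, smul_zero]

/-- For a Hermitian `H = Σ H_l` with Hermitian layers satisfying `[H_l, H_m] = 0`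
for `|l - m| > 1`, every eigenvector `ψ` of `H` satisfies
`⟨ψ, [H_l, H_{l+1}] ψ⟩ = 0` for all `l`, and consequently the first-order Trotter
perturbation `V = (i/2) Σ_{l>m} [H_l, H_m]` satisfies `⟨ψ, V ψ⟩ = 0`. -/
theorem layered_commutator_expectation_zero (n Γ : ℕ)
    (H : Fin Γ → Matrix (Fin n) (Fin n) ℂ)
    (hherm : ∀ l, (H l).IsHermitian)
    (hcomm : ∀ l m : Fin Γ, 1 < |(l : ℤ) - (m : ℤ)| → H l * H m = H m * H l)
    (ψ : Fin n → ℂ) (hψ : ψ ≠ 0) (E : ℂ)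
    (heig : (∑ l, H l).mulVec ψ = E • ψ) :
    (∀ (l : ℕ) (h1 : l < Γ) (h2 : l + 1 < Γ),
      star ψ ⬝ᵥ (H ⟨l, h1⟩ * H ⟨l + 1, h2⟩ - H ⟨l + 1, h2⟩ * H ⟨l, h1⟩).mulVec ψ = 0)
    ∧ star ψ ⬝ᵥ
        ((Complex.I / 2) •
          ∑ l : Fin Γ, ∑ m ∈ Finset.univ.filter (· < l),
            (H l * H m - H m * H l)).mulVec ψ = 0 :=
  layered_commutator_expectation_zero_general n Γ H hherm hcomm ψ E heig
end

section
/- Let H(s) = H + sV with H, V Hermitian, and let ψ(s) be a smooth family of unit eigenvectors of H(s) with eigenvalue E(s), where the eigenvalue is separated from the rest of the spectrum by a gap ≥ λ > 0 for all s ∈ [0, s₀]. Write f(s) = 1 − |⟨ψ(0), ψ(s)⟩|² and assume f(s) ≤ ‖V‖² s² / λ². If additionally ⟨ψ(0), V ψ(0)⟩ = 0, ‖V‖ s ≤ λ, and ‖H‖ ≥ 2λ, then |E(s) − E(0)| ≤ C · ‖V‖² ‖H‖ s² / λ² for an absolute constant C. -/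
/-!
Split `ψ(s) = a ψ(0) + w` with `w ⊥ ψ(0)`, so that `‖w‖² = 1 - |a|² = f(s)`. Since `ψ(0)` is an
eigenvector of the symmetric `H`, the cross terms of `⟪ψ(s), H ψ(s)⟫` vanish and it equals
`E(0) - ‖w‖² E(0) + ⟪w, H w⟫`; since `⟪ψ(0), V ψ(0)⟫ = 0`, `⟪ψ(s), V ψ(s)⟫` is `O(‖V‖ ‖w‖)`.
Hence `|E(s) - E(0)| ≤ 2‖H‖ f + s‖V‖ (2√f + f)`, and `√f ≤ ‖V‖ s / λ ≤ 1`, `λ ≤ ‖H‖ / 2`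
turn every term into a multiple of `‖H‖ ‖V‖² s² / λ²`.
-/

open scoped InnerProductSpace

section

variable {𝕜 E : Type*} [RCLike 𝕜] [NormedAddCommGroup E] [InnerProductSpace 𝕜 E]

lemma norm_inner_map_le (T : E →L[𝕜] E) (x y : E) : ‖⟪x, T y⟫_𝕜‖ ≤ ‖T‖ * ‖x‖ * ‖y‖ :=
  calc ‖⟪x, T y⟫_𝕜‖ ≤ ‖x‖ * ‖T y‖ := norm_inner_le_norm _ _
    _ ≤ ‖x‖ * (‖T‖ * ‖y‖) := by gcongr; exact T.le_opNorm y
    _ = ‖T‖ * ‖x‖ * ‖y‖ := by ring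

lemma inner_map_self_eq_of_eigen {T : E →ₗ[𝕜] E} {ψ : E} {μ : 𝕜} (hψ : ‖ψ‖ = 1)
    (hTψ : T ψ = μ • ψ) : ⟪ψ, T ψ⟫_𝕜 = μ := by
  rw [hTψ, inner_smul_right, inner_self_eq_norm_sq_to_K, hψ]; simp

lemma norm_eigenvalue_le {T : E →L[𝕜] E} {ψ : E} {μ : 𝕜} (hψ : ‖ψ‖ = 1)
    (hTψ : T ψ = μ • ψ) : ‖μ‖ ≤ ‖T‖ := by
  simpa [hTψ, norm_smul, hψ] using T.le_opNorm ψ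

variable {φ w : E}

lemma inner_sub_inner_smul_self (hφ : ‖φ‖ = 1) (ψ : E) : ⟪φ, ψ - ⟪φ, ψ⟫_𝕜 • φ⟫_𝕜 = 0 := by
  rw [inner_sub_right, inner_smul_right, inner_self_eq_norm_sq_to_K, hφ]; simp

lemma norm_smul_add_sq (hφ : ‖φ‖ = 1) (hw : ⟪φ, w⟫_𝕜 = 0) (a : 𝕜) :
    ‖a • φ + w‖ ^ 2 = ‖a‖ ^ 2 + ‖w‖ ^ 2 := by
  have := norm_add_sq_eq_norm_sq_add_norm_sq_of_inner_eq_zero (a • φ) w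
    (by rw [inner_smul_left, hw, mul_zero])
  rw [norm_smul, hφ, mul_one] at this
  simpa only [sq] using this

lemma inner_smul_add_map_smul_add_of_eigen {T : E →ₗ[𝕜] E} (hT : T.IsSymmetric) {μ : 𝕜}
    (hφ : ‖φ‖ = 1) (hTφ : T φ = μ • φ) (hw : ⟪φ, w⟫_𝕜 = 0) (a : 𝕜) :
    ⟪a • φ + w, T (a • φ + w)⟫_𝕜 = (‖a‖ : 𝕜) ^ 2 * μ + ⟪w, T w⟫_𝕜 := by
  have hφw : ⟪φ, T w⟫_𝕜 = 0 := by rw [← hT, hTφ, inner_smul_left, hw, mul_zero]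
  have hwφ : ⟪w, T φ⟫_𝕜 = 0 := by
    rw [hTφ, inner_smul_right, ← inner_conj_symm, hw, map_zero, mul_zero]
  rw [map_add, map_smul, inner_add_left, inner_add_right, inner_add_right, inner_smul_left,
    inner_smul_left, inner_smul_right, inner_smul_right, inner_map_self_eq_of_eigen hφ hTφ, hφw,
    hwφ, ← RCLike.conj_mul]
  ring

lemma norm_inner_smul_add_map_smul_add_le (V : E →L[𝕜] E) (hφ : ‖φ‖ = 1)
    (hVφ : ⟪φ, V φ⟫_𝕜 = 0) (a : 𝕜) :
    ‖⟪a • φ + w, V (a • φ + w)⟫_𝕜‖ ≤ ‖V‖ * ‖w‖ * (2 * ‖a‖ + ‖w‖) := by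
  have hexpand : ⟪a • φ + w, V (a • φ + w)⟫_𝕜 =
      (starRingEnd 𝕜) a * ⟪φ, V w⟫_𝕜 + a * ⟪w, V φ⟫_𝕜 + ⟪w, V w⟫_𝕜 := by
    simp only [map_add, map_smul, inner_add_left, inner_add_right, inner_smul_left,
      inner_smul_right, hVφ]
    ring
  rw [hexpand]
  calc _ ≤ ‖a‖ * (‖V‖ * ‖φ‖ * ‖w‖) + ‖a‖ * (‖V‖ * ‖w‖ * ‖φ‖) + ‖V‖ * ‖w‖ * ‖w‖ := by
        refine (norm_add₃_le).trans (add_le_add (add_le_add ?_ ?_) (norm_inner_map_le V w w))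
        · rw [norm_mul, RCLike.norm_conj]; gcongr; exact norm_inner_map_le V φ w
        · rw [norm_mul]; gcongr; exact norm_inner_map_le V w φ
    _ = ‖V‖ * ‖w‖ * (2 * ‖a‖ + ‖w‖) := by rw [hφ]; ring

theorem abs_eigenvalue_sub_le {H V : E →L[𝕜] E} (hH : (H : E →ₗ[𝕜] E).IsSymmetric) {a : 𝕜}
    {s E₀ E₁ : ℝ}
    (hφ : ‖φ‖ = 1) (hw : ⟪φ, w⟫_𝕜 = 0) (hψ : ‖a • φ + w‖ = 1) (hs : 0 ≤ s)
    (hHφ : H φ = (E₀ : 𝕜) • φ) (hVφ : ⟪φ, V φ⟫_𝕜 = 0)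
    (hψE : (H + (s : 𝕜) • V) (a • φ + w) = (E₁ : 𝕜) • (a • φ + w)) :
    |E₁ - E₀| ≤ 2 * ‖H‖ * ‖w‖ ^ 2 + ‖V‖ * s * ‖w‖ * (2 + ‖w‖) := by
  have hpyth : ‖a‖ ^ 2 + ‖w‖ ^ 2 = 1 := by rw [← norm_smul_add_sq hφ hw, hψ, one_pow]
  have ha : ‖a‖ ≤ 1 := by nlinarith [norm_nonneg a]
  have hE₀ : |E₀| ≤ ‖H‖ := by simpa using norm_eigenvalue_le hφ hHφ
  have hsplit : ((E₁ - E₀ : ℝ) : 𝕜) =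
      ⟪w, H w⟫_𝕜 - (‖w‖ : 𝕜) ^ 2 * E₀ + s * ⟪a • φ + w, V (a • φ + w)⟫_𝕜 := by
    have hE₁ := inner_map_self_eq_of_eigen (T := ((H + (s : 𝕜) • V : E →L[𝕜] E) : E →ₗ[𝕜] E))
      hψ hψE
    have hH' := inner_smul_add_map_smul_add_of_eigen hH hφ hHφ hw a
    have hpyth' : (‖a‖ : 𝕜) ^ 2 = 1 - (‖w‖ : 𝕜) ^ 2 := by
      rw [eq_sub_iff_add_eq]; exact_mod_cast hpyth
    simp only [ContinuousLinearMap.coe_coe, add_apply, smul_apply, inner_add_right,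
      inner_smul_right] at hE₁ hH'
    rw [RCLike.ofReal_sub, ← hE₁, hH', hpyth']
    ring
  calc |E₁ - E₀| = ‖((E₁ - E₀ : ℝ) : 𝕜)‖ := (RCLike.norm_ofReal _).symm
    _ ≤ ‖H‖ * ‖w‖ * ‖w‖ + ‖w‖ ^ 2 * |E₀| + s * (‖V‖ * ‖w‖ * (2 * ‖a‖ + ‖w‖)) := by
      rw [hsplit]
      refine norm_add_le_of_le (norm_sub_le_of_le (norm_inner_map_le H w w) ?_) ?_
      · simp [norm_pow]
      · rw [norm_mul, RCLike.norm_ofReal, abs_of_nonneg hs]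
        gcongr
        exact norm_inner_smul_add_map_smul_add_le V hφ hVφ a
    _ ≤ 2 * ‖H‖ * ‖w‖ ^ 2 + ‖V‖ * s * ‖w‖ * (2 + ‖w‖) := by
      have hHterm := mul_le_mul_of_nonneg_left hE₀ (sq_nonneg ‖w‖)
      have hVterm : s * (‖V‖ * ‖w‖ * (2 * ‖a‖ + ‖w‖)) ≤ s * (‖V‖ * ‖w‖ * (2 * 1 + ‖w‖)) := by
        gcongr
      nlinarith

end

lemma second_order_bound_le {h δ lam x : ℝ} (hlam : 0 < lam) (hx : 0 ≤ x) (hxδ : x * lam ≤ δ)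
    (hδ : δ ≤ lam) (hh : 2 * lam ≤ h) :
    2 * h * x ^ 2 + δ * x * (2 + x) ≤ 4 * h * δ ^ 2 / lam ^ 2 := by
  have hδ0 : 0 ≤ δ := (mul_nonneg hx hlam.le).trans hxδ
  have hx1 : x ≤ 1 := by nlinarith
  have hsq : (x * lam) ^ 2 ≤ δ ^ 2 := pow_le_pow_left₀ (by positivity) hxδ 2
  rw [le_div_iff₀ (by positivity)]
  calc (2 * h * x ^ 2 + δ * x * (2 + x)) * lam ^ 2
      = 2 * h * (x * lam) ^ 2 + δ * (x * lam) * (2 + x) * lam := by ring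
    _ ≤ 2 * h * δ ^ 2 + δ * δ * 3 * lam := by gcongr <;> linarith
    _ ≤ 4 * h * δ ^ 2 := by nlinarith [sq_nonneg δ]

/-- Second-order energy shift: there is an absolute constant `C` such that for any
smooth eigenpair branch `(ψ(s), E(s))` of `H(s) = H + sV` whose eigenvalue is
gap-separated by `λ`, if `f(s) = 1 - |⟨ψ(0), ψ(s)⟩|² ≤ ‖V‖²s²/λ²`,
`⟨ψ(0), V ψ(0)⟩ = 0`, `‖V‖ s ≤ λ` and `‖H‖ ≥ 2λ`, then
`|E(s) - E(0)| ≤ C ‖V‖² ‖H‖ s² / λ²`. -/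
theorem second_order_energy_shift :
    ∃ C : ℝ, 0 < C ∧
      ∀ (n : ℕ) (H V : EuclideanSpace ℂ (Fin n) →L[ℂ] EuclideanSpace ℂ (Fin n)),
        IsSelfAdjoint H → IsSelfAdjoint V →
        ∀ (s₀ lam : ℝ), 0 ≤ s₀ → 0 < lam →
        ∀ (ψ : ℝ → EuclideanSpace ℂ (Fin n)) (Ev : ℝ → ℝ),
        ContDiff ℝ 1 ψ →
        (∀ s ∈ Set.Icc 0 s₀, (H + (s : ℂ) • V) (ψ s) = (Ev s : ℂ) • ψ s) →
        (∀ s ∈ Set.Icc 0 s₀, ‖ψ s‖ = 1) →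
        (∀ s ∈ Set.Icc 0 s₀, ∀ μ : ℝ,
          (∃ v, v ≠ 0 ∧ (H + (s : ℂ) • V) v = (μ : ℂ) • v) → μ ≠ Ev s →
            lam ≤ |μ - Ev s|) →
        (∀ s ∈ Set.Icc 0 s₀,
          1 - ‖⟪ψ 0, ψ s⟫_ℂ‖ ^ 2 ≤ ‖V‖ ^ 2 * s ^ 2 / lam ^ 2) →
        ⟪ψ 0, V (ψ 0)⟫_ℂ = 0 →
        2 * lam ≤ ‖H‖ →
        ∀ s ∈ Set.Icc 0 s₀, ‖V‖ * s ≤ lam →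
          |Ev s - Ev 0| ≤ C * ‖V‖ ^ 2 * ‖H‖ * s ^ 2 / lam ^ 2 := by
  refine ⟨4, by norm_num, ?_⟩
  intro n H V hH _ s₀ lam hs₀ hlam ψ Ev _ heig hnorm _ hf hV0 hHlam s hs hVs
  have h0 : (0 : ℝ) ∈ Set.Icc 0 s₀ := ⟨le_rfl, hs₀⟩
  set a := ⟪ψ 0, ψ s⟫_ℂ
  set w := ψ s - a • ψ 0
  have hψs : ψ s = a • ψ 0 + w := (add_sub_cancel _ _).symm
  have hw : ⟪ψ 0, w⟫_ℂ = 0 := inner_sub_inner_smul_self (hnorm 0 h0) (ψ s)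
  have hwsq : ‖w‖ ^ 2 ≤ (‖V‖ * s / lam) ^ 2 := by
    have hpyth := norm_smul_add_sq (hnorm 0 h0) hw a
    rw [← hψs, hnorm s hs] at hpyth
    rw [div_pow, mul_pow]; linarith [hf s hs]
  have hwlam : ‖w‖ * lam ≤ ‖V‖ * s := by
    rw [← le_div_iff₀ hlam]
    exact (pow_le_pow_iff_left₀ (norm_nonneg w) (by have := hs.1; positivity) two_ne_zero).1 hwsq
  have hE := abs_eigenvalue_sub_le hH.isSymmetric (hnorm 0 h0) hw (hψs ▸ hnorm s hs) hs.1
    (by simpa using heig 0 h0) hV0 (hψs ▸ heig s hs)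
  calc |Ev s - Ev 0| ≤ _ := hE
    _ ≤ 4 * ‖H‖ * (‖V‖ * s) ^ 2 / lam ^ 2 :=
      second_order_bound_le hlam (norm_nonneg w) hwlam hVs hHlam
    _ = 4 * ‖V‖ ^ 2 * ‖H‖ * s ^ 2 / lam ^ 2 := by ring
end

section
/- Let A, B be n×n complex matrices and δt > 0 with ‖A‖δt, ‖B‖δt small. Then e^{−iAδt} e^{−iBδt} = e^{−i H̃ δt} where H̃ = A + B − (iδt/2)[A, B] + R with ‖R‖ ≤ C δt² (‖A‖+‖B‖)³ for an absolute constant C, provided (‖A‖+‖B‖)δt ≤ 1/4. -/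
/-!
Put `X = -iδt A`, `Y = -iδt B` and `W = e^X e^Y - 1`. Since `‖X‖ + ‖Y‖ ≤ 1/4`, the Taylor
expansion of the exponential gives `W = X + Y + X²/2 + XY + Y²/2 + O(‖X‖ + ‖Y‖)³`, so
`‖W‖ < 1` and the series `Z = log (1 + W) = ∑ (-1)^k W^(k+1) / (k+1)` converges with
`e^Z = e^X e^Y`. Truncating that series after `W - W²/2` and substituting the expansion of `W`
gives `Z = X + Y + [X, Y]/2 + O(‖X‖ + ‖Y‖)³`, with every tail bounded by a geometric series;
then `H̃ = iZ/δt`.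

The identity `exp (log (1 + W)) = 1 + W` is proved in the closed commutative subalgebra generated
by `W`, where `z ↦ exp (-log (1 + zW)) (1 + zW)` has derivative zero on a disc containing `0`
and `1`.
-/

open NormedSpace Finset
open scoped Nat

theorem norm_tsum_sub_sum_range_le {E : Type*} [NormedAddCommGroup E] [CompleteSpace E]
    {f : ℕ → E} {b r : ℝ} {m : ℕ} (hr₀ : 0 ≤ r) (hr : r < 1)
    (hf : ∀ k, m ≤ k → ‖f k‖ ≤ b * r ^ k) :
    ‖∑' k, f k - ∑ k ∈ range m, f k‖ ≤ b * r ^ m / (1 - r) := by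
  have htail : ∀ k, ‖f (k + m)‖ ≤ b * r ^ m * r ^ k := fun k => by
    rw [mul_assoc, ← pow_add, add_comm m]
    exact hf _ (Nat.le_add_left m k)
  have hgeom := (hasSum_geometric_of_lt_one hr₀ hr).mul_left (b * r ^ m)
  have hf : Summable f := (summable_nat_add_iff m).mp (.of_norm_bounded hgeom.summable htail)
  rw [← hf.sum_add_tsum_nat_add m, add_sub_cancel_left, div_eq_mul_inv]
  exact tsum_of_norm_bounded hgeom htail

section BanachAlgebra

variable {𝔸 : Type*} [NormedRing 𝔸] [NormedAlgebra ℂ 𝔸]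

theorem mem_eball_expSeries_radius (x : 𝔸) :
    x ∈ Metric.eball (0 : 𝔸) (expSeries ℂ 𝔸).radius :=
  (expSeries_radius_eq_top ℂ 𝔸).symm ▸ edist_lt_top _ _

theorem norm_inv_two_smul_sq_le (V : 𝔸) : ‖(2⁻¹ : ℂ) • V ^ 2‖ ≤ 2⁻¹ * ‖V‖ ^ 2 := by
  rw [norm_smul, norm_inv, Complex.norm_ofNat]
  gcongr
  exact norm_pow_le' V two_pos

theorem mul_smul_pow (c : ℂ) (W : 𝔸) (k : ℕ) : W * (c • W) ^ k = c ^ k • W ^ (k + 1) := by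
  rw [smul_pow, mul_smul_comm, pow_succ']

noncomputable def logOneAdd (W : 𝔸) : 𝔸 :=
  ∑' k : ℕ, ((-1) ^ k / (k + 1) : ℂ) • W ^ (k + 1)

theorem norm_logOneAdd_term_le (W : 𝔸) (k : ℕ) :
    ‖((-1) ^ k / (k + 1) : ℂ) • W ^ (k + 1)‖ ≤ ‖W‖ ^ (k + 1) / (k + 1) := by
  rw [norm_smul, norm_div, norm_pow, norm_neg, norm_one, one_pow, one_div_mul_eq_div]
  have hk : ‖(k + 1 : ℂ)‖ = k + 1 := by exact_mod_cast Complex.norm_natCast (k + 1)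
  rw [hk]
  gcongr
  exact norm_pow_le' W k.succ_pos

variable [CompleteSpace 𝔸]

theorem norm_exp_sub_sum_range_le {X : 𝔸} {m : ℕ} (hm : 0 < m) (hX : ‖X‖ < 1) :
    ‖exp X - ∑ k ∈ range m, (k !⁻¹ : ℂ) • X ^ k‖ ≤ (m ! : ℝ)⁻¹ * ‖X‖ ^ m / (1 - ‖X‖) := by
  rw [congrFun (exp_eq_tsum ℂ) X]
  refine norm_tsum_sub_sum_range_le (norm_nonneg X) hX fun k hk => ?_
  rw [norm_smul, norm_inv, Complex.norm_natCast]
  gcongr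
  exact norm_pow_le' X (hm.trans_le hk)

theorem norm_exp_sub_one_le_of_norm_le {X : 𝔸} (hX : ‖X‖ ≤ 1 / 4) :
    ‖exp X - 1‖ ≤ 4 / 3 * ‖X‖ := by
  have h := norm_exp_sub_sum_range_le one_pos (hX.trans_lt (by norm_num))
  simp only [range_one, sum_singleton, Nat.factorial_zero, Nat.cast_one, inv_one, pow_zero,
    one_smul, pow_one] at h
  refine h.trans ?_
  rw [div_le_iff₀ (by linarith)]
  nlinarith [norm_nonneg X]

theorem norm_exp_sub_quadratic_le_of_norm_le {X : 𝔸} (hX : ‖X‖ ≤ 1 / 4) :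
    ‖exp X - (1 + X + (2⁻¹ : ℂ) • X ^ 2)‖ ≤ 2 / 9 * ‖X‖ ^ 3 := by
  have h := norm_exp_sub_sum_range_le three_pos (hX.trans_lt (by norm_num))
  rw [show ∑ k ∈ range 3, (k !⁻¹ : ℂ) • X ^ k = 1 + X + (2⁻¹ : ℂ) • X ^ 2 by
    simp [sum_range_succ, Nat.factorial]] at h
  refine h.trans ?_
  rw [div_le_iff₀ (by linarith)]
  nlinarith [pow_nonneg (norm_nonneg X) 3]

theorem summable_logOneAdd {W : 𝔸} (hW : ‖W‖ < 1) :
    Summable fun k : ℕ => ((-1) ^ k / (k + 1) : ℂ) • W ^ (k + 1) := by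
  refine .of_norm_bounded ((summable_geometric_of_lt_one (norm_nonneg W) hW).mul_left ‖W‖)
    fun k => (norm_logOneAdd_term_le W k).trans ?_
  rw [pow_succ']
  exact div_le_self (by positivity) (by linarith [k.cast_nonneg (α := ℝ)])

theorem norm_logOneAdd_sub_le {W : 𝔸} (hW : ‖W‖ < 1) :
    ‖logOneAdd W - (W - (2⁻¹ : ℂ) • W ^ 2)‖ ≤ ‖W‖ ^ 3 / (3 * (1 - ‖W‖)) := by
  have hb : ∀ k : ℕ, 2 ≤ k →
      ‖((-1) ^ k / (k + 1) : ℂ) • W ^ (k + 1)‖ ≤ ‖W‖ / 3 * ‖W‖ ^ k := by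
    intro k hk
    refine (norm_logOneAdd_term_le W k).trans ?_
    rw [div_le_iff₀ (by positivity), pow_succ']
    have hk3 : (3 : ℝ) ≤ k + 1 := by norm_cast; omega
    have hW0 := mul_nonneg (norm_nonneg W) (pow_nonneg (norm_nonneg W) k)
    nlinarith [mul_le_mul_of_nonneg_left hk3 hW0]
  have h := norm_tsum_sub_sum_range_le (norm_nonneg W) hW hb
  rw [show ∑ k ∈ range 2, ((-1) ^ k / (k + 1) : ℂ) • W ^ (k + 1) = W - (2⁻¹ : ℂ) • W ^ 2 by
    norm_num [sum_range_succ, sub_eq_add_neg]] at h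
  refine h.trans (le_of_eq ?_)
  field_simp

theorem hasDerivAt_logOneAdd_smul {W : 𝔸} {ρ : ℝ} (hρ : ρ * ‖W‖ < 1) {z : ℂ} (hz : ‖z‖ < ρ) :
    HasDerivAt (fun z : ℂ => logOneAdd (z • W)) (W * ∑' k, (-z • W) ^ k) z := by
  have hρ₀ : 0 < ρ := (norm_nonneg z).trans_lt hz
  have hterm : ∀ (k : ℕ) (y : ℂ),
      HasDerivAt (fun z : ℂ => ((-1) ^ k / (k + 1) : ℂ) • (z • W) ^ (k + 1))
        (W * (-y • W) ^ k) y := by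
    intro k y
    rw [mul_smul_pow]
    simp_rw [smul_pow, smul_smul]
    refine (((hasDerivAt_pow (k + 1) y).const_mul _).smul_const _).congr_deriv ?_
    congr 1
    field_simp
    rw [neg_pow]
    push_cast
    ring
  have hbound : ∀ (k : ℕ) (y : ℂ), y ∈ Metric.ball 0 ρ →
      ‖W * (-y • W) ^ k‖ ≤ ‖W‖ * (ρ * ‖W‖) ^ k := by
    intro k y hy
    rw [mem_ball_zero_iff] at hy
    calc ‖W * (-y • W) ^ k‖ = ‖y‖ ^ k * ‖W ^ (k + 1)‖ := by
          rw [mul_smul_pow, norm_smul, norm_pow, norm_neg]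
      _ ≤ ρ ^ k * ‖W‖ ^ (k + 1) := by gcongr; exact norm_pow_le' W k.succ_pos
      _ = ‖W‖ * (ρ * ‖W‖) ^ k := by ring
  have hsum := hasDerivAt_tsum_of_isPreconnected
    ((summable_geometric_of_lt_one (by positivity) hρ).mul_left ‖W‖) Metric.isOpen_ball
    (convex_ball 0 ρ).isPreconnected (fun k y _ => hterm k y) hbound (Metric.mem_ball_self hρ₀)
    (by simp) (mem_ball_zero_iff.mpr hz)
  have hzW : ‖-z • W‖ < 1 := by
    rw [norm_smul, norm_neg]
    exact (mul_le_mul_of_nonneg_right hz.le (norm_nonneg W)).trans_lt hρ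
  rwa [(summable_geometric_of_norm_lt_one hzW).tsum_mul_left] at hsum

end BanachAlgebra

section Commutative

variable {𝔹 : Type*} [NormedCommRing 𝔹] [NormedAlgebra ℂ 𝔹] [CompleteSpace 𝔹]

theorem hasDerivAt_exp_neg_logOneAdd_smul_mul {W : 𝔹} {ρ : ℝ} (hρ : ρ * ‖W‖ < 1) {z : ℂ}
    (hz : ‖z‖ < ρ) :
    HasDerivAt (fun z : ℂ => exp (-logOneAdd (z • W)) * (1 + z • W)) 0 z := by
  have hzW : ‖-z • W‖ < 1 := by
    rw [norm_smul, norm_neg]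
    exact (mul_le_mul_of_nonneg_right hz.le (norm_nonneg W)).trans_lt hρ
  have hexp :=
    (hasFDerivAt_exp (𝕂 := ℂ)).comp_hasDerivAt z (hasDerivAt_logOneAdd_smul hρ hz).neg
  have hlin : HasDerivAt (fun z : ℂ => 1 + z • W) W z := by
    simpa using ((hasDerivAt_id z).smul_const W).const_add 1
  refine (hexp.mul hlin).congr_deriv ?_
  have hgeom := geom_series_mul_neg _ hzW
  rw [show (1 : 𝔹) - -z • W = 1 + z • W by rw [neg_smul, sub_neg_eq_add]] at hgeom
  simp only [Pi.neg_apply, smul_apply, one_apply_eq_self, smul_eq_mul, mul_neg, neg_mul,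
    Function.comp_apply]
  linear_combination (exp := 1) (-exp (-logOneAdd (z • W)) * W) * hgeom

theorem exp_logOneAdd_of_comm {W : 𝔹} (hW : ‖W‖ < 1) : exp (logOneAdd W) = 1 + W := by
  set ρ : ℝ := 2 / (1 + ‖W‖)
  have hρ1 : 1 < ρ := by rw [lt_div_iff₀ (by positivity)]; linarith
  have hρW : ρ * ‖W‖ < 1 := by rw [div_mul_eq_mul_div, div_lt_one (by positivity)]; linarith
  have hderiv := fun z (hz : z ∈ Metric.ball (0 : ℂ) ρ) =>
    hasDerivAt_exp_neg_logOneAdd_smul_mul hρW (mem_ball_zero_iff.mp hz)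
  have hconst : exp (-logOneAdd ((1 : ℂ) • W)) * (1 + (1 : ℂ) • W)
      = exp (-logOneAdd ((0 : ℂ) • W)) * (1 + (0 : ℂ) • W) :=
    Metric.isOpen_ball.is_const_of_deriv_eq_zero (convex_ball 0 ρ).isPreconnected
      (fun z hz => (hderiv z hz).differentiableAt.differentiableWithinAt)
      (fun z hz => (hderiv z hz).deriv) (by simpa using hρ1) (by simpa using zero_lt_one.trans hρ1)
  have hlog0 : logOneAdd (0 : 𝔹) = 0 := by simp [logOneAdd]
  rw [one_smul, zero_smul, hlog0, neg_zero, exp_zero, add_zero, mul_one] at hconst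
  calc exp (logOneAdd W) = exp (logOneAdd W) * (exp (-logOneAdd W) * (1 + W)) := by
        rw [hconst, mul_one]
    _ = 1 + W := by
        rw [← mul_assoc, ← exp_add_of_mem_ball (mem_eball_expSeries_radius _)
          (mem_eball_expSeries_radius _), add_neg_cancel, exp_zero, one_mul]

end Commutative

section BanachAlgebra

variable {𝔸 : Type*} [NormedRing 𝔸] [NormedAlgebra ℂ 𝔸] [CompleteSpace 𝔸]

theorem exp_logOneAdd {W : 𝔸} (hW : ‖W‖ < 1) : exp (logOneAdd W) = 1 + W := by
  let S := Algebra.elemental ℂ W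
  let _ : NormedCommRing S := { (inferInstance : NormedRing S) with mul_comm := mul_comm }
  let W' : S := ⟨W, Algebra.elemental.self_mem ℂ W⟩
  have hlog : ((logOneAdd W' : S) : 𝔸) = logOneAdd W := by
    simpa [logOneAdd, W'] using
      ((summable_logOneAdd (W := W') hW).hasSum.map S.val continuous_subtype_val).tsum_eq.symm
  rw [← hlog]
  change exp (S.val (logOneAdd W')) = 1 + W
  rw [← map_exp_of_mem_ball S.val continuous_subtype_val _ (mem_eball_expSeries_radius _),
    exp_logOneAdd_of_comm (W := W') hW]
  rfl

theorem norm_exp_mul_exp_sub_one_sub_le {X Y : 𝔸} (h : ‖X‖ + ‖Y‖ ≤ 1 / 4) :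
    ‖exp X * exp Y - 1 - (X + Y + (2⁻¹ : ℂ) • X ^ 2 + X * Y + (2⁻¹ : ℂ) • Y ^ 2)‖
      ≤ (‖X‖ + ‖Y‖) ^ 3 := by
  have hx := norm_nonneg X
  have hy := norm_nonneg Y
  set P := (2⁻¹ : ℂ) • X ^ 2
  set Q := (2⁻¹ : ℂ) • Y ^ 2
  set rX := exp X - (1 + X + P)
  set rY := exp Y - (1 + Y + Q)
  have hsplit : exp X * exp Y - 1 - (X + Y + P + X * Y + Q)
      = rX + rY + rX * (exp Y - 1) + (X + P) * rY + X * Q + P * Y + P * Q := by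
    simp only [rX, rY]
    noncomm_ring
  rw [hsplit]
  calc _ ≤ ‖rX‖ + ‖rY‖ + ‖rX‖ * ‖exp Y - 1‖ + (‖X‖ + ‖P‖) * ‖rY‖ + ‖X‖ * ‖Q‖ + ‖P‖ * ‖Y‖
        + ‖P‖ * ‖Q‖ := by
        repeat' first
          | exact norm_mul_le_of_le (norm_add_le _ _) le_rfl
          | exact norm_mul_le _ _
          | exact le_rfl
          | refine (norm_add_le _ _).trans (add_le_add ?_ ?_)
    _ ≤ 2 / 9 * ‖X‖ ^ 3 + 2 / 9 * ‖Y‖ ^ 3 + 2 / 9 * ‖X‖ ^ 3 * (4 / 3 * ‖Y‖)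
        + (‖X‖ + 2⁻¹ * ‖X‖ ^ 2) * (2 / 9 * ‖Y‖ ^ 3) + ‖X‖ * (2⁻¹ * ‖Y‖ ^ 2)
        + 2⁻¹ * ‖X‖ ^ 2 * ‖Y‖ + 2⁻¹ * ‖X‖ ^ 2 * (2⁻¹ * ‖Y‖ ^ 2) := by
        have := norm_exp_sub_quadratic_le_of_norm_le (X := X) (by linarith)
        have := norm_exp_sub_quadratic_le_of_norm_le (X := Y) (by linarith)
        have := norm_exp_sub_one_le_of_norm_le (X := Y) (by linarith)
        have := norm_inv_two_smul_sq_le X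
        have := norm_inv_two_smul_sq_le Y
        gcongr
    _ ≤ (‖X‖ + ‖Y‖) ^ 3 := by
        nlinarith [mul_nonneg hx hy, pow_nonneg hx 3, pow_nonneg hy 3,
          mul_nonneg (mul_nonneg hx hy) hy, mul_nonneg (mul_nonneg hx hy) hx]

theorem norm_exp_mul_exp_sub_one_sub_add_le {X Y : 𝔸} (h : ‖X‖ + ‖Y‖ ≤ 1 / 4) :
    ‖exp X * exp Y - 1 - (X + Y)‖ ≤ (‖X‖ + ‖Y‖) ^ 2 := by
  have hq : ‖(2⁻¹ : ℂ) • X ^ 2 + X * Y + (2⁻¹ : ℂ) • Y ^ 2‖ ≤ 2⁻¹ * (‖X‖ + ‖Y‖) ^ 2 := by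
    calc _ ≤ 2⁻¹ * ‖X‖ ^ 2 + ‖X‖ * ‖Y‖ + 2⁻¹ * ‖Y‖ ^ 2 :=
          (norm_add₃_le ..).trans (add_le_add_three (norm_inv_two_smul_sq_le X)
            (norm_mul_le X Y) (norm_inv_two_smul_sq_le Y))
      _ = 2⁻¹ * (‖X‖ + ‖Y‖) ^ 2 := by ring
  have hs : 0 ≤ ‖X‖ + ‖Y‖ := by positivity
  calc _ = ‖(2⁻¹ : ℂ) • X ^ 2 + X * Y + (2⁻¹ : ℂ) • Y ^ 2
          + (exp X * exp Y - 1 - (X + Y + (2⁻¹ : ℂ) • X ^ 2 + X * Y + (2⁻¹ : ℂ) • Y ^ 2))‖ := by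
        congr 1
        abel
    _ ≤ 2⁻¹ * (‖X‖ + ‖Y‖) ^ 2 + (‖X‖ + ‖Y‖) ^ 3 :=
        (norm_add_le _ _).trans (add_le_add hq (norm_exp_mul_exp_sub_one_sub_le h))
    _ ≤ (‖X‖ + ‖Y‖) ^ 2 := by nlinarith

theorem exists_exp_eq_exp_mul_exp_norm_sub_le {X Y : 𝔸} (h : ‖X‖ + ‖Y‖ ≤ 1 / 4) :
    ∃ Z : 𝔸, exp Z = exp X * exp Y ∧
      ‖Z - (X + Y + (2⁻¹ : ℂ) • (X * Y - Y * X))‖ ≤ 4 * (‖X‖ + ‖Y‖) ^ 3 := by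
  set s := ‖X‖ + ‖Y‖
  have hs : 0 ≤ s := by positivity
  set W := exp X * exp Y - 1
  set D := W - (X + Y + (2⁻¹ : ℂ) • X ^ 2 + X * Y + (2⁻¹ : ℂ) • Y ^ 2)
  have hD : ‖D‖ ≤ s ^ 3 := norm_exp_mul_exp_sub_one_sub_le h
  have hWS : ‖W - (X + Y)‖ ≤ s ^ 2 := norm_exp_mul_exp_sub_one_sub_add_le h
  have hS : ‖X + Y‖ ≤ s := norm_add_le X Y
  have hW : ‖W‖ ≤ 5 / 4 * s := by
    calc ‖W‖ = ‖(W - (X + Y)) + (X + Y)‖ := by rw [sub_add_cancel]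
      _ ≤ s ^ 2 + s := (norm_add_le _ _).trans (add_le_add hWS hS)
      _ ≤ 5 / 4 * s := by nlinarith
  have hW1 : ‖W‖ ≤ 5 / 16 := by linarith
  refine ⟨logOneAdd W, by rw [exp_logOneAdd (by linarith), add_sub_cancel], ?_⟩
  have hid : logOneAdd W - (X + Y + (2⁻¹ : ℂ) • (X * Y - Y * X))
      = (logOneAdd W - (W - (2⁻¹ : ℂ) • W ^ 2)) + D
        - (2⁻¹ : ℂ) • ((W - (X + Y)) * W + (X + Y) * (W - (X + Y))) := by
    simp only [D, sq, mul_sub, sub_mul, mul_add, add_mul]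
    module
  have hlog : ‖logOneAdd W - (W - (2⁻¹ : ℂ) • W ^ 2)‖ ≤ s ^ 3 := by
    refine (norm_logOneAdd_sub_le (by linarith)).trans ?_
    rw [div_le_iff₀ (by linarith)]
    have h3 := pow_le_pow_left₀ (norm_nonneg W) hW 3
    nlinarith [pow_nonneg hs 3, mul_le_mul_of_nonneg_left hW1 (pow_nonneg hs 3)]
  have hquad : ‖(2⁻¹ : ℂ) • ((W - (X + Y)) * W + (X + Y) * (W - (X + Y)))‖ ≤ 9 / 8 * s ^ 3 := by
    rw [norm_smul, norm_inv, Complex.norm_ofNat]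
    calc 2⁻¹ * ‖(W - (X + Y)) * W + (X + Y) * (W - (X + Y))‖
        ≤ 2⁻¹ * (s ^ 2 * (5 / 4 * s) + s * s ^ 2) := by
          gcongr
          refine (norm_add_le _ _).trans (add_le_add ?_ ?_)
          · exact (norm_mul_le _ _).trans (mul_le_mul hWS hW (norm_nonneg _) (by positivity))
          · exact (norm_mul_le _ _).trans (mul_le_mul hS hWS (norm_nonneg _) hs)
      _ = 9 / 8 * s ^ 3 := by ring
  rw [hid]
  calc _ ≤ s ^ 3 + s ^ 3 + 9 / 8 * s ^ 3 :=
        (norm_sub_le _ _).trans (add_le_add ((norm_add_le _ _).trans (add_le_add hlog hD)) hquad)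
    _ ≤ 4 * s ^ 3 := by nlinarith [pow_nonneg hs 3]

end BanachAlgebra

/-- Baker–Campbell–Hausdorff with remainder: there is an absolute constant `C` such
that for Hermitian `A, B` and `δt > 0` with `(‖A‖+‖B‖)δt ≤ 1/4`,
`e^{-iAδt} e^{-iBδt} = e^{-iH̃δt}` with `H̃ = A + B - (iδt/2)[A,B] + R` and
`‖R‖ ≤ C δt² (‖A‖+‖B‖)³`. -/
theorem bch_second_order :
    ∃ C : ℝ, 0 < C ∧
      ∀ (n : ℕ) (A B : EuclideanSpace ℂ (Fin n) →L[ℂ] EuclideanSpace ℂ (Fin n)),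
        IsSelfAdjoint A → IsSelfAdjoint B →
        ∀ δt : ℝ, 0 < δt → (‖A‖ + ‖B‖) * δt ≤ 1 / 4 →
          ∃ R : EuclideanSpace ℂ (Fin n) →L[ℂ] EuclideanSpace ℂ (Fin n),
            NormedSpace.exp ((-(Complex.I * (δt : ℂ))) • A) *
                NormedSpace.exp ((-(Complex.I * (δt : ℂ))) • B)
              = NormedSpace.exp ((-(Complex.I * (δt : ℂ))) •
                  (A + B - ((Complex.I * (δt : ℂ)) / 2) • (A * B - B * A) + R))
            ∧ ‖R‖ ≤ C * δt ^ 2 * (‖A‖ + ‖B‖) ^ 3 := by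
  refine ⟨4, by norm_num, fun n A B _ _ δt hδt hsmall => ?_⟩
  set c : ℂ := -(Complex.I * δt)
  have hc : ‖c‖ = δt := by simp [c, abs_of_pos hδt]
  have hc0 : c ≠ 0 := norm_pos_iff.mp (hc ▸ hδt)
  obtain ⟨Z, hexp, hZ⟩ := exists_exp_eq_exp_mul_exp_norm_sub_le (X := c • A) (Y := c • B)
    (by rw [norm_smul, norm_smul, hc]; linarith)
  have hT : A + B - (Complex.I * δt / 2) • (A * B - B * A)
      = c⁻¹ • (c • A + c • B + (2⁻¹ : ℂ) • (c • A * (c • B) - c • B * (c • A))) := by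
    simp only [smul_mul_smul_comm]
    match_scalars <;> field_simp <;> ring
  refine ⟨c⁻¹ • Z - (A + B - (Complex.I * δt / 2) • (A * B - B * A)), ?_, ?_⟩
  · rw [add_sub_cancel, smul_inv_smul₀ hc0, hexp]
  · rw [hT, ← smul_sub c⁻¹ Z, norm_smul, norm_inv, hc]
    calc δt⁻¹ * ‖Z - _‖ ≤ δt⁻¹ * (4 * (‖c • A‖ + ‖c • B‖) ^ 3) := by gcongr
      _ = 4 * δt ^ 2 * (‖A‖ + ‖B‖) ^ 3 := by
        rw [norm_smul, norm_smul, hc]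
        field_simp
end
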